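/- Crossover criterion: for every rooted plane tree T with n(T) = n ≥ 2 nodes and l(T) = l leaves, the binary tunnel-digging code TD(T) is strictly shorter than the binary pit-climbing code PC(T) if and only if 2l > n; moreover the two codes have equal length if and only if 2l = n. -/

import Mathlib

/-- A rooted plane tree: a root node together with a finite ordered list of
subtrees, the subtrees rooted at the children of the root. -/
inductive PTree : Type
  | node : List PTree → PTree

namespace PTree

/-- The subtrees rooted at the children of the root. -/
def children : PTree → List PTree
  | node ts => ts

mutual
/-- Number of nodes of a rooted plane tree. -/
def numNodes : PTree → ℕ
  | node ts => 1 + numNodesList ts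
def numNodesList : List PTree → ℕ
  | [] => 0
  | t :: ts => numNodes t + numNodesList ts
end

mutual
/-- Number of leaves (nodes with no children); a single-node tree has one leaf. -/
def numLeaves : PTree → ℕ
  | node [] => 1
  | node (t :: ts) => numLeaves t + numLeavesList ts
def numLeavesList : List PTree → ℕ
  | [] => 0
  | t :: ts => numLeaves t + numLeavesList ts
end

/-- Symbols of the ternary pit-climbing code: ↓, ↑, ⇑. -/
inductive PCSym : Type
  | down   -- ↓ : fall to the leftmost unexplored leaf
  | up     -- ↑ : climb to a never-before-visited node
  | upSeen -- ⇑ : climb to an already-visited node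
deriving DecidableEq

mutual
/-- Ternary pit-climbing code TPC: empty for a single node; `TPC t ++ [↑]` for a
single child subtree `t`; `TPC t₁ ++ [↑,↓] ++ TPC t₂ ++ [⇑,↓] ++ ⋯ ++ [⇑,↓] ++ TPC tₖ ++ [⇑]`
for children subtrees `t₁, …, tₖ`, `k ≥ 2`. -/
def TPC : PTree → List PCSym
  | node [] => []
  | node [t] => TPC t ++ [.up]
  | node (t₁ :: t₂ :: ts) => TPC t₁ ++ [.up, .down] ++ TPCRest (t₂ :: ts)
/-- TPC contribution of the second-onwards children subtrees. -/
def TPCRest : List PTree → List PCSym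
  | [] => []
  | [t] => TPC t ++ [.upSeen]
  | t :: ts => TPC t ++ [.upSeen, .down] ++ TPCRest ts
end

/-- Binary encoding of the pit-climbing symbols: ↓ ↦ 0, ⇑ ↦ 00, ↑ ↦ 1. -/
def pcBits : PCSym → List Bool
  | .down => [false]
  | .upSeen => [false, false]
  | .up => [true]

/-- Binary pit-climbing code PC. -/
def PC (T : PTree) : List Bool := (TPC T).flatMap pcBits

lemma numNodesList_append (a b : List PTree) :
    numNodesList (a ++ b) = numNodesList a + numNodesList b := by
  induction a with
  | nil => simp [numNodesList]
  | cons t ts ih => simp [numNodesList, ih]; ring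

lemma numNodesList_children_flatten (l : List PTree) :
    numNodesList ((l.map children).flatten) + l.length = numNodesList l := by
  induction l with
  | nil => simp [numNodesList]
  | cons t ts ih =>
      cases t with
      | node cs =>
        simp only [List.map_cons, List.flatten_cons, numNodesList_append,
          List.length_cons, numNodesList, children, numNodes]
        omega

/-- Breadth-first list of the sibling groups of a tree, starting from the list
`gs` of sibling groups at the current level: the groups of the current level
followed by the groups of children on the levels below, level by level and
left to right within each level. -/
def bfsGroups (gs : List (List PTree)) : List (List PTree) :=
  if h : gs.flatten.isEmpty then []
  else gs ++ bfsGroups (gs.flatten.map children)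
termination_by numNodesList gs.flatten
decreasing_by
  have h1 := numNodesList_children_flatten gs.flatten
  have h2 : gs.flatten.length ≠ 0 := by
    intro hh
    rw [List.length_eq_zero_iff] at hh
    exact h (List.isEmpty_iff.mpr hh)
  omega

/-- Symbols of the ternary tunnel-digging code: ←, →, ⇒. -/
inductive TDSym : Type
  | leaf   -- ← : a leaf node
  | inner  -- → : a node with at least one child
  | tunnel -- ⇒ : transition between consecutive non-sibling nodes
deriving DecidableEq

/-- The symbols written for one sibling group: ← for each leaf, → for each
node with at least one child. -/
def groupSyms (g : List PTree) : List TDSym :=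
  g.map (fun t => if t.children.isEmpty then .leaf else .inner)

/-- Ternary tunnel-digging code TTD: the non-root nodes in breadth-first order
(by increasing depth, left to right within each depth), ← for each leaf and →
for each internal node, with ⇒ inserted between every two consecutive
non-sibling nodes. -/
def TTD (T : PTree) : List TDSym :=
  List.intercalate [TDSym.tunnel]
    (((bfsGroups [T.children]).filter (fun g => ¬ g.isEmpty)).map groupSyms)

/-- Binary encoding of the tunnel-digging symbols: ⇒ ↦ 0, → ↦ 00, ← ↦ 1. -/
def tdBits : TDSym → List Bool
  | .tunnel => [false]
  | .inner => [false, false]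
  | .leaf => [true]

/-- Binary tunnel-digging code TD. -/
def TD (T : PTree) : List Bool := (TTD T).flatMap tdBits

/-- TreeExplorer code TE: `0·PC(T)` if `l(T) < n(T)/2`, and `1·TD(T)` otherwise. -/
def TE (T : PTree) : List Bool :=
  if 2 * numLeaves T < numNodes T then false :: PC T else true :: TD T

end PTree

/-!
Both code lengths are linear in `n` and `l`. In `PC` every non-root node contributes one climbing
symbol, and each of the `l - 1` non-first children adds a `↓` and turns its climb into a two-bit
`⇑`, so `|PC| = n + 2l - 3`. In `TD` every non-root node costs one bit, plus one more if it is
internal, and the nonempty sibling groups, separated by single `⇒`s, are exactly the children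
lists of the `n - l` internal nodes, so `|TD| = 3n - 2l - 3` once `n ≥ 2`.
Hence `|PC| - |TD| = 2 (2l - n)`.
-/

namespace List

variable {α β : Type*}

theorem length_intercalate_add_length {sep : List α} {xs : List (List α)} (h : xs ≠ []) :
    (sep.intercalate xs).length + sep.length = (xs.map length).sum + sep.length * xs.length := by
  induction xs with
  | nil => contradiction
  | cons x xs ih =>
    rcases xs with _ | ⟨y, ys⟩
    · simp
    · rw [intercalate_cons_cons, length_append, length_append]
      simp only [map_cons, sum_cons, length_cons] at ih ⊢
      linarith [ih (cons_ne_nil _ _)]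

theorem flatMap_intercalate (f : α → List β) (sep : List α) (xs : List (List α)) :
    (sep.intercalate xs).flatMap f = (sep.flatMap f).intercalate (xs.map (·.flatMap f)) := by
  induction xs with
  | nil => rfl
  | cons x xs ih =>
    rcases xs with _ | ⟨y, ys⟩
    · simp
    · simp only [intercalate_cons_cons, flatMap_append, ih, map_cons]

end List

namespace PTree

theorem numLeavesList_append (a b : List PTree) :
    numLeavesList (a ++ b) = numLeavesList a + numLeavesList b := by
  induction a with
  | nil => simp [numLeavesList]
  | cons t ts ih => simp [numLeavesList, ih, Nat.add_assoc]

theorem numLeaves_node_of_ne_nil {ts : List PTree} (h : ts ≠ []) :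
    numLeaves (node ts) = numLeavesList ts := by
  obtain ⟨t, ts, rfl⟩ := List.exists_cons_of_ne_nil h
  rfl

theorem numLeaves_eq (t : PTree) :
    numLeaves t = numLeavesList t.children + if t.children.isEmpty then 1 else 0 := by
  obtain ⟨_ | ⟨t, ts⟩⟩ := t <;> rfl

theorem numLeavesList_flatten_map_children_add (l : List PTree) :
    numLeavesList (l.map children).flatten + l.countP (fun t => t.children.isEmpty) =
      numLeavesList l := by
  induction l with
  | nil => rfl
  | cons t ts ih =>
    rw [List.map_cons, List.flatten_cons, numLeavesList_append, List.countP_cons, numLeavesList,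
      numLeaves_eq t]
    omega

theorem length_flatten_bfsGroups (gs : List (List PTree)) :
    (bfsGroups gs).flatten.length = numNodesList gs.flatten := by
  fun_induction bfsGroups gs with
  | case1 gs h => rw [List.isEmpty_iff.mp h]; rfl
  | case2 gs _ ih =>
    rw [List.flatten_append, List.length_append, ih, ← numNodesList_children_flatten gs.flatten]
    omega

theorem countP_flatten_bfsGroups_add_numLeavesList (gs : List (List PTree)) :
    (bfsGroups gs).flatten.countP (fun t => !t.children.isEmpty) + numLeavesList gs.flatten =
      numNodesList gs.flatten := by
  fun_induction bfsGroups gs with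
  | case1 gs h => rw [List.isEmpty_iff.mp h]; rfl
  | case2 gs _ ih =>
    have hleaves := numLeavesList_flatten_map_children_add gs.flatten
    have hnodes := numNodesList_children_flatten gs.flatten
    have hsplit := List.length_eq_countP_add_countP (fun t : PTree => t.children.isEmpty)
      (l := gs.flatten)
    simp only [decide_not, Bool.decide_eq_true] at hsplit
    rw [List.flatten_append, List.countP_append]
    omega

theorem countP_bfsGroups_add_numLeavesList (gs : List (List PTree)) :
    (bfsGroups gs).countP (fun g => !g.isEmpty) + numLeavesList gs.flatten =
      gs.countP (fun g => !g.isEmpty) + numNodesList gs.flatten := by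
  fun_induction bfsGroups gs with
  | case1 gs h =>
    have hgs : gs.countP (fun g => !g.isEmpty) = 0 := by
      rw [List.countP_eq_zero]
      intro g hg
      simp [List.flatten_eq_nil_iff.mp (List.isEmpty_iff.mp h) g hg]
    rw [hgs, List.isEmpty_iff.mp h]
    rfl
  | case2 gs _ ih =>
    have hleaves := numLeavesList_flatten_map_children_add gs.flatten
    have hnodes := numNodesList_children_flatten gs.flatten
    have hsplit := List.length_eq_countP_add_countP (fun t : PTree => t.children.isEmpty)
      (l := gs.flatten)
    simp only [decide_not, Bool.decide_eq_true] at hsplit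
    have hgroups : (gs.flatten.map children).countP (fun g => !g.isEmpty) =
        gs.flatten.countP (fun t => !t.children.isEmpty) := List.countP_map
    rw [List.countP_append]
    omega

theorem length_flatMap_tdBits_groupSyms (g : List PTree) :
    ((groupSyms g).flatMap tdBits).length = g.length + g.countP (fun t => !t.children.isEmpty) := by
  induction g with
  | nil => rfl
  | cons t ts ih =>
    rw [groupSyms, List.map_cons, List.flatMap_cons, List.length_append, ← groupSyms, ih,
      List.countP_cons, List.length_cons]
    cases t.children.isEmpty <;> simp [tdBits] <;> omega

theorem length_TD_node_add_numLeavesList {ts : List PTree} (hts : ts ≠ []) :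
    (TD (node ts)).length + 2 * numLeavesList ts = 3 * numNodesList ts := by
  have hnodes := length_flatten_bfsGroups [ts]
  have hinner := countP_flatten_bfsGroups_add_numLeavesList [ts]
  have hgroups := countP_bfsGroups_add_numLeavesList [ts]
  have hone : [ts].countP (fun g => !g.isEmpty) = 1 := by simp [hts]
  rw [List.countP_eq_length_filter] at hgroups
  simp only [List.flatten_singleton] at hnodes hinner hgroups
  set B := bfsGroups [ts]
  set G := B.filter (fun g => !g.isEmpty)
  have hTD : TD (node ts) = [false].intercalate (G.map (fun g => (groupSyms g).flatMap tdBits)) := by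
    simp only [TD, TTD, children, List.flatMap_intercalate, decide_not, Bool.decide_eq_true,
      List.map_map]
    rfl
  have hbits : (G.map fun g => ((groupSyms g).flatMap tdBits).length).sum =
      B.flatten.length + B.flatten.countP (fun t => !t.children.isEmpty) := by
    simp only [length_flatMap_tdBits_groupSyms, List.sum_map_add, ← List.length_flatten,
      ← List.countP_flatten, G, List.flatten_filter_not_isEmpty]
  have hG : G ≠ [] := List.ne_nil_of_length_pos (by omega)
  have hlen := List.length_intercalate_add_length (sep := [false])
    (xs := G.map (fun g => (groupSyms g).flatMap tdBits)) (by simpa using hG)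
  simp only [List.map_map, Function.comp_def, List.length_map, List.length_singleton] at hlen
  rw [hTD]
  omega

mutual

theorem length_PC_add_three : ∀ t : PTree, (PC t).length + 3 = numNodes t + 2 * numLeaves t
  | node [] => rfl
  | node [t] => by
    have := length_PC_add_three t
    simp [PC, TPC, numNodes, numNodesList, numLeaves, numLeavesList, pcBits,
      -List.length_flatMap] at *
    omega
  | node (t₁ :: t₂ :: ts) => by
    have h₁ := length_PC_add_three t₁
    have h₂ := length_flatMap_pcBits_TPCRest_add_one (t₂ :: ts) (List.cons_ne_nil _ _)
    simp [PC, TPC, numNodes, numNodesList, numLeaves, numLeavesList, pcBits,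
      -List.length_flatMap] at *
    omega

theorem length_flatMap_pcBits_TPCRest_add_one : ∀ ts : List PTree, ts ≠ [] →
    ((TPCRest ts).flatMap pcBits).length + 1 = numNodesList ts + 2 * numLeavesList ts
  | [t], _ => by
    have := length_PC_add_three t
    simp [PC, TPCRest, numNodesList, numLeavesList, pcBits, -List.length_flatMap] at *
    omega
  | t₁ :: t₂ :: ts, _ => by
    have h₁ := length_PC_add_three t₁
    have h₂ := length_flatMap_pcBits_TPCRest_add_one (t₂ :: ts) (List.cons_ne_nil _ _)
    simp [PC, TPCRest, numNodesList, numLeavesList, pcBits, -List.length_flatMap] at *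
    omega

end

theorem length_TD_add_three {T : PTree} (hT : 2 ≤ numNodes T) :
    (TD T).length + 2 * numLeaves T + 3 = 3 * numNodes T := by
  obtain ⟨ts⟩ := T
  have hts : ts ≠ [] := by
    rintro rfl
    simp [numNodes, numNodesList] at hT
  have := length_TD_node_add_numLeavesList hts
  rw [numLeaves_node_of_ne_nil hts, numNodes]
  omega

end PTree

open PTree in
/-- **Crossover criterion.** For every rooted plane tree `T` with `n ≥ 2`
nodes and `l` leaves, `TD(T)` is strictly shorter than `PC(T)` iff `2l > n`,
and the two codes have equal length iff `2l = n`. -/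
theorem crossover_criterion (T : PTree) (hn : 2 ≤ numNodes T) :
    ((TD T).length < (PC T).length ↔ numNodes T < 2 * numLeaves T) ∧
    ((TD T).length = (PC T).length ↔ 2 * numLeaves T = numNodes T) := by
  have hTD := length_TD_add_three hn
  have hPC := length_PC_add_three T
  omega
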